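/- arXiv:math/0604109 — 4 statements merged into one kernel-verified Lean document; each statement's English description precedes it below -/
import Mathlib

section
/- Let n_1, …, n_p be integers ≥ 2, let Λ be the multiplicative subgroup of ℝ_{>0} generated by n_1, …, n_p, let m = lcm(n_1, …, n_p), A = ℤ[1/m], and d = gcd(n_1 − 1, …, n_p − 1). Then the additive subgroup of ℝ generated by { (1 − λ)a : λ ∈ Λ, a ∈ A } is equal to dA = { d·a : a ∈ A }. -/
open Filter Topology Set

/-- The right derivative of `f` at `x`. -/
noncomputable def rDeriv (f : ℝ → ℝ) (x : ℝ) : ℝ := derivWithin f (Set.Ici x) x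

/-- The left derivative of `f` at `x`. -/
noncomputable def lDeriv (f : ℝ → ℝ) (x : ℝ) : ℝ := derivWithin f (Set.Iic x) x

/-- `x` is a break point of `f`: the one-sided slopes at `x` differ. -/
def IsBreak (f : ℝ → ℝ) (x : ℝ) : Prop := rDeriv f x ≠ lDeriv f x

/-- The jump of `f` at `x` : the ratio of the right and left derivatives. -/
noncomputable def jumpRatio (f : ℝ → ℝ) (x : ℝ) : ℝ := rDeriv f x / lDeriv f x

/-- `f : ℝ → ℝ` is (the lift of) an orientation-preserving piecewise linear
homeomorphism of the circle `S_r = ℝ/rℤ` : it is strictly increasing, commutes with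
the translation by `r`, and is affine on each interval of a finite subdivision
`0 = a 0 < a 1 < ⋯ < a k = r`. -/
def IsPLplus (r : ℝ) (f : ℝ → ℝ) : Prop :=
  StrictMono f ∧ Continuous f ∧ (∀ x, f (x + r) = f x + r) ∧
    ∃ (k : ℕ) (a : ℕ → ℝ), 1 ≤ k ∧ a 0 = 0 ∧ a k = r ∧
      (∀ i, i < k → a i < a (i + 1)) ∧
      (∀ i, i < k → ∃ lam c : ℝ, 0 < lam ∧
        ∀ x ∈ Set.Icc (a i) (a (i + 1)), f x = lam * x + c)

/-- `f : ℝ → ℝ` is (the lift of) an orientation-reversing piecewise linear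
homeomorphism of the circle `S_r = ℝ/rℤ`. -/
def IsPLminus (r : ℝ) (f : ℝ → ℝ) : Prop :=
  StrictAnti f ∧ Continuous f ∧ (∀ x, f (x + r) = f x - r) ∧
    ∃ (k : ℕ) (a : ℕ → ℝ), 1 ≤ k ∧ a 0 = 0 ∧ a k = r ∧
      (∀ i, i < k → a i < a (i + 1)) ∧
      (∀ i, i < k → ∃ lam c : ℝ, lam < 0 ∧
        ∀ x ∈ Set.Icc (a i) (a (i + 1)), f x = lam * x + c)

/-- `f` is (the lift of) a piecewise linear homeomorphism of the circle `S_r`,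
orientation-preserving or orientation-reversing. -/
def IsPLany (r : ℝ) (f : ℝ → ℝ) : Prop := IsPLplus r f ∨ IsPLminus r f

/-- All slopes of `f` lie in `Λ`. -/
def SlopesIn (L : Set ℝ) (f : ℝ → ℝ) : Prop := ∀ x : ℝ, rDeriv f x ∈ L

/-- `x` lies in `A` modulo `rℤ`. -/
def InModR (r : ℝ) (A : Set ℝ) (x : ℝ) : Prop := ∃ n : ℤ, x - n * r ∈ A

/-- All break points of `f` and their images lie in `A` (mod `rℤ`). -/
def BreaksIn (r : ℝ) (A : Set ℝ) (f : ℝ → ℝ) : Prop :=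
  ∀ x : ℝ, IsBreak f x → InModR r A x ∧ InModR r A (f x)

/-- `ℤ[1/m]` as a subset of `ℝ`. -/
def Zinv (m : ℕ) : Set ℝ := {a : ℝ | ∃ (p : ℤ) (k : ℕ), a = (p : ℝ) / (m : ℝ) ^ k}

/-- The set of integer powers of `m`, as a subset of `ℝ`. -/
def powersOf (m : ℕ) : Set ℝ := {y : ℝ | ∃ n : ℤ, y = (m : ℝ) ^ n}

/-- Membership in the Thompson group `T_{r,m}` (at the level of lifts):
slopes are integer powers of `m`, break points and their images lie in `ℤ[1/m]`. -/
def memT (r : ℝ) (m : ℕ) (f : ℝ → ℝ) : Prop :=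
  IsPLplus r f ∧ SlopesIn (powersOf m) f ∧ BreaksIn r (Zinv m) f

/-- The multiplicative subgroup of `ℝ` generated by the integers `n 0, …, n (p-1)`. -/
def LambdaSet (p : ℕ) (n : Fin p → ℕ) : Set ℝ :=
  {x : ℝ | ∃ g : Fin p → ℤ, x = ∏ i, (n i : ℝ) ^ (g i)}

/-- Membership in the Thompson–Stein group `T_{r,(n_1,…,n_p)}` (at the level of lifts):
slopes lie in `⟨n_1,…,n_p⟩`, break points and their images lie in `ℤ[1/m]`,
`m = lcm (n_i)`. -/
def memTS (r : ℝ) (p : ℕ) (n : Fin p → ℕ) (f : ℝ → ℝ) : Prop :=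
  IsPLplus r f ∧ SlopesIn (LambdaSet p n) f ∧
    BreaksIn r (Zinv (Finset.lcm Finset.univ n)) f

/-- `ρ` is (a representative of) the rotation number of the circle map with lift `f`:
`ρ = lim f̃ⁿ(0)/(r n)`. -/
def HasRotNum (r : ℝ) (f : ℝ → ℝ) (ρ : ℝ) : Prop :=
  Filter.Tendsto (fun nn : ℕ => f^[nn] 0 / (r * nn)) Filter.atTop (nhds ρ)

/-- `g` is a lift of the identity of the circle `ℝ/rℤ`, i.e. a translation by a
multiple of `r`. -/
def IsCircleId (r : ℝ) (g : ℝ → ℝ) : Prop := ∃ n : ℤ, ∀ x : ℝ, g x = x + n * r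

/-- The permutation `e` of the circle `ℝ/rℤ` is an element of the Thompson group
`T_{r,m}`. -/
def InTcirc (r : ℝ) (m : ℕ) (e : Equiv.Perm (AddCircle r)) : Prop :=
  ∃ f : ℝ → ℝ, memT r m f ∧ ∀ x : ℝ, e (x : AddCircle r) = ((f x : ℝ) : AddCircle r)

/-- The permutation `e` of the circle `ℝ/rℤ` is an element of the Thompson–Stein
group `T_{r,(n_1,…,n_p)}`. -/
def InTScirc (r : ℝ) (p : ℕ) (n : Fin p → ℕ) (e : Equiv.Perm (AddCircle r)) : Prop :=
  ∃ f : ℝ → ℝ, memTS r p n f ∧ ∀ x : ℝ, e (x : AddCircle r) = ((f x : ℝ) : AddCircle r)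

/-!
Inside the ring `A = ℤ[1/m]`, the units `λ` with `1 - λ ∈ dA` form a group, because
`1 - λμ = (1 - λ) + λ(1 - μ)` and `1 - λ⁻¹ = -λ⁻¹(1 - λ)`. Every generator `n_i` is a unit
of `A` with `1 - n_i ∈ dA`, so all of `Λ` lies in that group and `(1 - λ)a ∈ dA`.
Conversely `d` is an integer combination of the `n_i - 1` (Bézout), and each
`(n_i - 1)a = -(1 - n_i)a` is a generator of the subgroup on the left.
-/

open Pointwise

theorem AddSubgroup.finsetGcd_nsmul_mem {G ι : Type*} [AddGroup G] (H : AddSubgroup G)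
    {x : G} (s : Finset ι) (k : ι → ℕ) (h : ∀ i ∈ s, k i • x ∈ H) : s.gcd k • x ∈ H := by
  classical
  induction s using Finset.induction_on with
  | empty => simp
  | insert a s ha ih =>
    rw [Finset.gcd_insert, ← natCast_zsmul]
    change ((Nat.gcd (k a) (s.gcd k) : ℕ) : ℤ) • x ∈ H
    have hbezout : ((Nat.gcd (k a) (s.gcd k) : ℕ) : ℤ) • x
        = Nat.gcdA (k a) (s.gcd k) • (k a • x) + Nat.gcdB (k a) (s.gcd k) • (s.gcd k • x) := by
      rw [Nat.gcd_eq_gcd_ab, add_zsmul, mul_comm, mul_zsmul, natCast_zsmul, mul_comm,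
        mul_zsmul, natCast_zsmul]
    rw [hbezout]
    exact add_mem (zsmul_mem (h a (s.mem_insert_self a)) _)
      (zsmul_mem (ih fun i hi => h i (Finset.mem_insert_of_mem hi)) _)

namespace Subring

variable {R : Type*} [CommRing R] (A : Subring R) (c : R)

theorem mul_mem_smul_toAddSubgroup {a x : R} (ha : a ∈ A) (hx : x ∈ c • A.toAddSubgroup) :
    a * x ∈ c • A.toAddSubgroup := by
  obtain ⟨b, hb, rfl⟩ := (AddSubgroup.mem_smul_pointwise_iff_exists _ _ _).mp hx
  refine (AddSubgroup.mem_smul_pointwise_iff_exists _ _ _).mpr ⟨a * b, A.mul_mem ha hb, ?_⟩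
  simp only [smul_eq_mul]
  ring

/-- The units `u` of `A` with `u ≡ 1` modulo `c • A`. -/
def congrUnits : Subgroup Rˣ where
  carrier := {u | (u : R) ∈ A ∧ ((u⁻¹ : Rˣ) : R) ∈ A ∧ 1 - (u : R) ∈ c • A.toAddSubgroup}
  one_mem' := ⟨A.one_mem, by simp, by simp⟩
  mul_mem' := by
    rintro u v ⟨hu, hu', hu''⟩ ⟨hv, hv', hv''⟩
    refine ⟨by simpa using A.mul_mem hu hv, by simpa [mul_comm] using A.mul_mem hu' hv', ?_⟩
    have hsplit : 1 - ((u * v : Rˣ) : R) = (1 - u) + u * (1 - v) := by push_cast; ring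
    rw [hsplit]
    exact add_mem hu'' (mul_mem_smul_toAddSubgroup A c hu hv'')
  inv_mem' := by
    rintro u ⟨hu, hu', hu''⟩
    refine ⟨hu', by simpa using hu, ?_⟩
    have hsplit : 1 - ((u⁻¹ : Rˣ) : R) = -(((u⁻¹ : Rˣ) : R) * (1 - u)) := by
      rw [mul_sub, Units.inv_mul]; ring
    rw [hsplit]
    exact neg_mem (mul_mem_smul_toAddSubgroup A c hu' hu'')

theorem one_sub_natCast_mem_smul {k d : ℕ} (hk : k ≠ 0) (hd : d ∣ k - 1) :
    1 - (k : R) ∈ (d : R) • A.toAddSubgroup := by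
  obtain ⟨j, hj⟩ := hd
  have hkj : (k : R) = 1 + d * j := by
    rw [show k = 1 + d * j by omega, Nat.cast_add, Nat.cast_one, Nat.cast_mul]
  refine (AddSubgroup.mem_smul_pointwise_iff_exists _ _ _).mpr
    ⟨-(j : R), neg_mem (natCast_mem A j), ?_⟩
  rw [smul_eq_mul, hkj]
  ring

end Subring

theorem Zinv.add_mem {m : ℕ} (hm : m ≠ 0) {a b : ℝ} (ha : a ∈ Zinv m) (hb : b ∈ Zinv m) :
    a + b ∈ Zinv m := by
  obtain ⟨q, k, rfl⟩ := ha
  obtain ⟨q', k', rfl⟩ := hb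
  refine ⟨q * m ^ k' + q' * m ^ k, k + k', ?_⟩
  have hmR : (m : ℝ) ≠ 0 := Nat.cast_ne_zero.mpr hm
  push_cast
  field_simp
  ring

def zinvSubring (m : ℕ) (hm : m ≠ 0) : Subring ℝ where
  carrier := Zinv m
  mul_mem' := by
    rintro _ _ ⟨q, k, rfl⟩ ⟨q', k', rfl⟩
    exact ⟨q * q', k + k', by push_cast; rw [pow_add, div_mul_div_comm]⟩
  one_mem' := ⟨1, 0, by simp⟩
  add_mem' := Zinv.add_mem hm
  zero_mem' := ⟨0, 0, by simp⟩
  neg_mem' := by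
    rintro _ ⟨q, k, rfl⟩
    exact ⟨-q, k, by push_cast; ring⟩

theorem inv_natCast_mem_zinv {m k : ℕ} (hm : m ≠ 0) (hk : k ∣ m) : (k : ℝ)⁻¹ ∈ Zinv m := by
  obtain ⟨j, rfl⟩ := hk
  have hk0 : (k : ℝ) ≠ 0 := by exact_mod_cast left_ne_zero_of_mul hm
  have hj0 : (j : ℝ) ≠ 0 := by exact_mod_cast right_ne_zero_of_mul hm
  exact ⟨j, 1, by push_cast; field_simp⟩

section LambdaSet

variable {p : ℕ} {n : Fin p → ℕ}

theorem natCast_mem_lambdaSet (i : Fin p) : (n i : ℝ) ∈ LambdaSet p n :=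
  ⟨Pi.single i 1, by simp [Pi.single_apply]⟩

theorem LambdaSet.exists_val_eq {G : Subgroup ℝˣ} (hG : ∀ i, ∃ u ∈ G, (u : ℝ) = n i)
    {x : ℝ} (hx : x ∈ LambdaSet p n) : ∃ u ∈ G, (u : ℝ) = x := by
  choose u hu hun using hG
  obtain ⟨g, rfl⟩ := hx
  exact ⟨∏ i, u i ^ g i, prod_mem fun i _ => zpow_mem (hu i) _, by
    simp [Units.coe_prod, Units.val_zpow_eq_zpow_val, hun]⟩

theorem one_sub_mem_of_mem_lambdaSet {A : Subring ℝ} {c : ℝ} (hn : ∀ i, n i ≠ 0)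
    (hinv : ∀ i, (n i : ℝ)⁻¹ ∈ A) (hc : ∀ i, 1 - (n i : ℝ) ∈ c • A.toAddSubgroup)
    {x : ℝ} (hx : x ∈ LambdaSet p n) : 1 - x ∈ c • A.toAddSubgroup := by
  have hG : ∀ i, ∃ u ∈ A.congrUnits c, (u : ℝ) = n i := fun i =>
    ⟨Units.mk0 (n i) (Nat.cast_ne_zero.mpr (hn i)),
      ⟨natCast_mem A _, by simpa using hinv i, by simpa using hc i⟩, rfl⟩
  obtain ⟨u, ⟨-, -, hu⟩, rfl⟩ := LambdaSet.exists_val_eq hG hx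
  exact hu

theorem finsetGcd_mul_mem_closure {A : Set ℝ} (hn : ∀ i, n i ≠ 0) {a : ℝ} (ha : a ∈ A) :
    ((Finset.univ.gcd fun i => n i - 1 : ℕ) : ℝ) * a ∈
      AddSubgroup.closure {x : ℝ | ∃ lam ∈ LambdaSet p n, ∃ a ∈ A, x = (1 - lam) * a} := by
  rw [← nsmul_eq_mul]
  refine AddSubgroup.finsetGcd_nsmul_mem _ _ _ fun i _ => ?_
  have hneg : (n i - 1) • a = -((1 - (n i : ℝ)) * a) := by
    rw [nsmul_eq_mul, Nat.cast_sub (Nat.one_le_iff_ne_zero.mpr (hn i))]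
    ring
  rw [hneg]
  exact neg_mem (AddSubgroup.subset_closure ⟨n i, natCast_mem_lambdaSet i, a, ha, rfl⟩)

end LambdaSet

theorem stmt8_general (p : ℕ) (n : Fin p → ℕ) (hn : ∀ i, 2 ≤ n i) :
    (AddSubgroup.closure {x : ℝ | ∃ lam ∈ LambdaSet p n,
        ∃ a ∈ Zinv (Finset.lcm Finset.univ n), x = (1 - lam) * a} : Set ℝ) =
      {x : ℝ | ∃ a ∈ Zinv (Finset.lcm Finset.univ n),
        x = ((Finset.gcd Finset.univ fun i => n i - 1 : ℕ) : ℝ) * a} := by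
  set m := Finset.univ.lcm n
  set d := Finset.univ.gcd fun i => n i - 1
  have hn0 : ∀ i, n i ≠ 0 := fun i => by have := hn i; omega
  have hm : m ≠ 0 := fun h => by
    obtain ⟨i, -, hi⟩ := Finset.lcm_eq_zero_iff.mp h
    exact hn0 i hi
  set A := zinvSubring m hm
  suffices h : AddSubgroup.closure {x : ℝ | ∃ lam ∈ LambdaSet p n,
      ∃ a ∈ Zinv m, x = (1 - lam) * a} = (d : ℝ) • A.toAddSubgroup by
    ext x
    rw [h, SetLike.mem_coe, AddSubgroup.mem_smul_pointwise_iff_exists]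
    simp [A, zinvSubring, eq_comm]
  refine le_antisymm ((AddSubgroup.closure_le _).mpr ?_) fun x hx => ?_
  · rintro _ ⟨lam, hlam, a, ha, rfl⟩
    rw [mul_comm]
    exact A.mul_mem_smul_toAddSubgroup _ ha <| one_sub_mem_of_mem_lambdaSet hn0
      (fun i => inv_natCast_mem_zinv hm (Finset.dvd_lcm (Finset.mem_univ i)))
      (fun i => A.one_sub_natCast_mem_smul (hn0 i) (Finset.gcd_dvd (Finset.mem_univ i))) hlam
  · obtain ⟨a, ha, rfl⟩ := (AddSubgroup.mem_smul_pointwise_iff_exists _ _ _).mp hx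
    exact finsetGcd_mul_mem_closure hn0 ha

/-- the additive subgroup of `ℝ` generated by `(1-Λ)A` equals `dA`,
where `Λ = ⟨n_1,…,n_p⟩`, `A = ℤ[1/lcm(n_i)]` and `d = gcd(n_i - 1)`. -/
theorem stmt8 (p : ℕ) (hp : 1 ≤ p) (n : Fin p → ℕ) (hn : ∀ i, 2 ≤ n i) :
    (AddSubgroup.closure {x : ℝ | ∃ lam ∈ LambdaSet p n,
        ∃ a ∈ Zinv (Finset.lcm Finset.univ n), x = (1 - lam) * a} : Set ℝ) =
      {x : ℝ | ∃ a ∈ Zinv (Finset.lcm Finset.univ n),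
        x = ((Finset.gcd Finset.univ fun i => n i - 1 : ℕ) : ℝ) * a} :=
  stmt8_general p n hn
end

section
/- Let n_1, …, n_p be integers ≥ 2 and let d = gcd(n_1 − 1, …, n_p − 1). Then there exist positive integers α_1, …, α_p such that, setting Π = n_1^{α_1} · n_2^{α_2} ⋯ n_p^{α_p}, the integer d divides Π − 1 and gcd((Π − 1)/d, d) = 1. -/
open Filter Topology Set

/-! Write `n i = 1 + d * m i` with `gcd (m i) = 1`. Modulo `d ^ 2` the cross terms vanish, so
`∏ n i ^ α i ≡ 1 + d * ∑ α i * m i`, hence `(∏ n i ^ α i - 1) / d ≡ ∑ α i * m i [MOD d]`. By Bézout some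
integer combination of the `m i` is `1`; reducing its coefficients modulo `d` (and adding `d` to
make them positive) gives exponents for which `∑ α i * m i` is a unit modulo `d`. -/

theorem Finset.gcd_natCast {ι : Type*} (s : Finset ι) (f : ι → ℕ) :
    s.gcd (fun i => (f i : ℤ)) = s.gcd f := by
  classical
  induction s using Finset.induction with
  | empty => simp
  | insert a s ha ih => rw [gcd_insert, gcd_insert, ih, ← Int.coe_gcd, Int.gcd_natCast_natCast]; rfl

theorem one_add_mul_pow_of_sq_eq_zero {R : Type*} [CommSemiring R] {d : R} (hd : d ^ 2 = 0)
    (x : R) (k : ℕ) : (1 + d * x) ^ k = 1 + d * (k * x) := by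
  induction k with
  | zero => simp
  | succ k ih =>
    rw [pow_succ, ih]
    calc (1 + d * (k * x)) * (1 + d * x) = 1 + d * ((k + 1) * x) + d ^ 2 * (k * x * x) := by ring
      _ = 1 + d * ((k + 1 : ℕ) * x) := by rw [hd]; push_cast; ring

theorem prod_one_add_mul_pow_of_sq_eq_zero {ι R : Type*} [CommSemiring R] {d : R} (hd : d ^ 2 = 0)
    (s : Finset ι) (m : ι → R) (α : ι → ℕ) :
    ∏ i ∈ s, (1 + d * m i) ^ α i = 1 + d * ∑ i ∈ s, α i * m i := by
  classical
  induction s using Finset.induction with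
  | empty => simp
  | insert a s ha ih =>
    rw [Finset.prod_insert ha, ih, Finset.sum_insert ha, one_add_mul_pow_of_sq_eq_zero hd]
    calc (1 + d * (α a * m a)) * (1 + d * ∑ i ∈ s, α i * m i)
        = 1 + d * (α a * m a + ∑ i ∈ s, α i * m i) + d ^ 2 * (α a * m a * ∑ i ∈ s, α i * m i) := by
          ring
      _ = _ := by rw [hd]; ring

theorem Nat.prod_one_add_mul_pow_modEq {ι : Type*} (d : ℕ) (s : Finset ι) (m α : ι → ℕ) :
    ∏ i ∈ s, (1 + d * m i) ^ α i ≡ 1 + d * ∑ i ∈ s, α i * m i [MOD d ^ 2] := by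
  rw [← ZMod.natCast_eq_natCast_iff]
  push_cast
  exact prod_one_add_mul_pow_of_sq_eq_zero (by exact_mod_cast ZMod.natCast_self (d ^ 2)) s _ _

theorem Nat.exists_pos_coprime_sum_mul {ι : Type*} (s : Finset ι) {m : ι → ℕ} (hm : s.gcd m = 1)
    {d : ℕ} (hd : 0 < d) : ∃ α : ι → ℕ, (∀ i, 1 ≤ α i) ∧ (∑ i ∈ s, α i * m i).Coprime d := by
  have : NeZero d := ⟨hd.ne'⟩
  obtain ⟨c, hc⟩ := Finset.gcd_eq_sum_mul s (fun i => (m i : ℤ))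
  rw [Finset.gcd_natCast, hm] at hc
  refine ⟨fun i => (c i : ZMod d).val + d, fun _ => Nat.le_add_left_of_le hd, ?_⟩
  rw [← ZMod.isUnit_iff_coprime]
  have hsum : ((∑ i ∈ s, ((c i : ZMod d).val + d) * m i : ℕ) : ZMod d) = 1 := by
    have hc' := congrArg (Int.cast : ℤ → ZMod d) hc
    push_cast at hc' ⊢
    simp only [ZMod.natCast_val, ZMod.cast_id', id, ZMod.natCast_self, add_zero]
    rw [hc']
    exact Finset.sum_congr rfl fun i _ => mul_comm _ _
  rw [hsum]
  exact isUnit_one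

theorem Nat.coprime_div_of_modEq_one_add_mul {P d S : ℕ} (hd : 0 < d) (hP : 0 < P)
    (h : P ≡ 1 + d * S [MOD d ^ 2]) (hS : S.Coprime d) : d ∣ P - 1 ∧ ((P - 1) / d).Coprime d := by
  have hP1 : P - 1 ≡ d * S [MOD d * d] := by
    rw [← sq]
    refine Nat.ModEq.add_left_cancel' 1 ?_
    rwa [Nat.add_sub_of_le hP]
  have hdvd : d ∣ P - 1 :=
    Nat.modEq_zero_iff_dvd.1 ((hP1.of_mul_right d).trans (Nat.modEq_zero_iff_dvd.2 ⟨S, rfl⟩))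
  refine ⟨hdvd, ?_⟩
  rw [← Nat.mul_div_cancel' hdvd] at hP1
  have hQ : (P - 1) / d ≡ S [MOD d] := Nat.ModEq.mul_left_cancel' hd.ne' hP1
  exact (Nat.ModEq.gcd_eq hQ).trans hS

/-- there exist positive integers `α_i` such that, with
`Π = ∏ n_i ^ α_i`, `d` divides `Π - 1` and `gcd((Π-1)/d, d) = 1`, where
`d = gcd(n_i - 1)`. -/
theorem stmt9 (p : ℕ) (hp : 1 ≤ p) (n : Fin p → ℕ) (hn : ∀ i, 2 ≤ n i) :
    ∃ α : Fin p → ℕ, (∀ i, 1 ≤ α i) ∧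
      (Finset.gcd Finset.univ fun i => n i - 1) ∣ (∏ i, n i ^ α i) - 1 ∧
      Nat.gcd (((∏ i, n i ^ α i) - 1) / Finset.gcd Finset.univ (fun i => n i - 1))
        (Finset.gcd Finset.univ fun i => n i - 1) = 1 := by
  obtain ⟨m, hm, hgcd⟩ := Finset.extract_gcd (fun i => n i - 1) ⟨⟨0, hp⟩, Finset.mem_univ _⟩
  set d := Finset.gcd Finset.univ fun i => n i - 1
  have hd : 0 < d := Nat.pos_of_ne_zero fun h => by
    have := Finset.gcd_eq_zero_iff.1 h ⟨0, hp⟩ (Finset.mem_univ _)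
    have := hn ⟨0, hp⟩
    omega
  have hn' : ∀ i, n i = 1 + d * m i := fun i => by
    have := hm i (Finset.mem_univ i)
    have := hn i
    omega
  obtain ⟨α, hα, hcop⟩ := Nat.exists_pos_coprime_sum_mul Finset.univ hgcd hd
  have hprod : ∏ i, n i ^ α i ≡ 1 + d * ∑ i, α i * m i [MOD d ^ 2] := by
    simpa only [← hn'] using Nat.prod_one_add_mul_pow_modEq d Finset.univ m α
  have hprod_pos : 0 < ∏ i, n i ^ α i :=
    Finset.prod_pos fun i _ => pow_pos (by have := hn i; omega) _
  exact ⟨α, hα, Nat.coprime_div_of_modEq_one_add_mul hd hprod_pos hprod hcop⟩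
end

section
/- Let r > 0 and let λ_1 > 1 > λ_2 > 0 be real numbers. Set a = r(1 − λ_2)/(λ_1 − λ_2) ∈ (0, r), and let f ∈ PL⁺(S_r) be the PL homeomorphism whose lift f̃ satisfies f̃(x) = λ_1 x + λ_2 (r − a) for x ∈ [0, a] and f̃(x) = λ_2 (x − a) + r for x ∈ [a, r] (so f has exactly the two break points 0 and a, with f(a) = 0). Then the rotation number of f is ρ(f) = log λ_1 / (log λ_1 − log λ_2) (mod 1). -/
open Filter Topology Set

/-! In the coordinate `y = log (λ₂ + (λ₁ - λ₂) x / r)` the circle `S_r` becomes a circle of length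
`log λ₁ - log λ₂` and `f` becomes the translation by `log λ₁`: on `[0, a]` the map multiplies the
affine function `λ₂ + (λ₁ - λ₂) x / r` by `λ₁`, on `[a, r]` (after subtracting `r`) by `λ₂`.
So `f` is conjugate to the rotation by `log λ₁ / (log λ₁ - log λ₂)`, and the conjugacy moves points
by a bounded amount, which pins down the rotation number. -/

theorem hasRotNum_of_semiconj {r ρ C : ℝ} {f H : ℝ → ℝ} (hH : Function.Semiconj H f (· + ρ))
    (hC : ∀ x, |x / r - H x| ≤ C) : HasRotNum r f ρ := by
  have hiter (n : ℕ) : H (f^[n] 0) = H 0 + n * ρ := by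
    rw [(hH.iterate_right n).eq, add_right_iterate_apply, nsmul_eq_mul]
  have hsmall : Tendsto (fun n : ℕ => f^[n] 0 / (r * n) - ρ) atTop (𝓝 0) := by
    refine squeeze_zero_norm' ?_ (tendsto_const_div_atTop_nhds_zero_nat (C + |H 0|))
    filter_upwards [eventually_gt_atTop 0] with n hn
    have hn' : (0 : ℝ) < n := Nat.cast_pos.mpr hn
    have hsplit : f^[n] 0 / (r * n) - ρ = (f^[n] 0 / r - H (f^[n] 0) + H 0) / n := by
      rw [hiter]; field_simp; ring
    rw [hsplit, Real.norm_eq_abs, abs_div, abs_of_pos hn']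
    gcongr
    exact (abs_add_le _ _).trans (add_le_add (hC _) le_rfl)
  simpa [HasRotNum] using hsmall.add_const ρ

theorem semiconj_of_forall_mem_Ico {r ρ : ℝ} {f H : ℝ → ℝ} (hr : 0 < r)
    (hf : ∀ x, f (x + r) = f x + r) (hH : ∀ x, H (x + r) = H x + 1)
    (hdom : ∀ x ∈ Ico 0 r, H (f x) = H x + ρ) : Function.Semiconj H f (· + ρ) := by
  have hper : Function.Periodic (fun x => H (f x) - H x) r := fun x => by
    simp only [hf, hH]; ring
  intro x
  obtain ⟨y, hy, hxy⟩ := hper.exists_mem_Ico₀ hr x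
  have := hdom y hy
  simp only at hxy ⊢
  linarith

noncomputable def fractLift (φ : ℝ → ℝ) (t : ℝ) : ℝ := ⌊t⌋ + φ (Int.fract t)

section fractLift

variable (φ : ℝ → ℝ)

theorem fractLift_add_one (t : ℝ) : fractLift φ (t + 1) = fractLift φ t + 1 := by
  simp only [fractLift, Int.floor_add_one, Int.fract_add_one]
  push_cast; ring

theorem fractLift_intCast_add (m : ℤ) {s : ℝ} (hs : s ∈ Ico 0 1) :
    fractLift φ (m + s) = m + φ s := by
  rw [fractLift, Int.floor_intCast_add, Int.fract_intCast_add, Int.floor_eq_zero_iff.mpr hs,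
    Int.fract_eq_self.mpr hs]
  simp

theorem fractLift_of_mem_Ico {s : ℝ} (hs : s ∈ Ico 0 1) : fractLift φ s = φ s := by
  simpa using fractLift_intCast_add φ 0 hs

theorem abs_sub_fractLift_le (hφ : ∀ s ∈ Ico 0 1, φ s ∈ Icc 0 1) (t : ℝ) :
    |t - fractLift φ t| ≤ 1 := by
  obtain ⟨h0, h1⟩ := hφ _ ⟨Int.fract_nonneg t, Int.fract_lt_one t⟩
  have hdecomp : t - fractLift φ t = Int.fract t - φ (Int.fract t) := by
    rw [fractLift, Int.fract]; ring
  rw [hdecomp, abs_le]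
  constructor <;> linarith [Int.fract_nonneg t, Int.fract_lt_one t]

end fractLift

noncomputable def boshernitzanCoord (lam1 lam2 t : ℝ) : ℝ :=
  (Real.log (lam2 + (lam1 - lam2) * t) - Real.log lam2) / (Real.log lam1 - Real.log lam2)

section boshernitzanCoord

variable {lam1 lam2 : ℝ} (h2 : 0 < lam2) (h12 : lam2 < lam1)
include h2 h12

theorem boshernitzanCoord_mem_Icc {t : ℝ} (ht : t ∈ Ico 0 1) :
    boshernitzanCoord lam1 lam2 t ∈ Icc 0 1 := by
  have hu0 : lam2 ≤ lam2 + (lam1 - lam2) * t := by nlinarith [ht.1]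
  have hu1 : lam2 + (lam1 - lam2) * t ≤ lam1 := by nlinarith [ht.2]
  have hL : 0 < Real.log lam1 - Real.log lam2 := by
    linarith [Real.log_lt_log h2 h12]
  rw [boshernitzanCoord, mem_Icc, div_le_one hL]
  exact ⟨div_nonneg (by linarith [Real.log_le_log h2 hu0]) hL.le,
    by linarith [Real.log_le_log (by linarith) hu1]⟩

variable {α : ℝ} (hα : (lam1 - lam2) * α = 1 - lam2)
include hα

theorem boshernitzanCoord_lam1_mul_add {t : ℝ} (ht : 0 ≤ t) :
    boshernitzanCoord lam1 lam2 (lam1 * t + lam2 * (1 - α)) =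
      boshernitzanCoord lam1 lam2 t + Real.log lam1 / (Real.log lam1 - Real.log lam2) := by
  have hscale : lam2 + (lam1 - lam2) * (lam1 * t + lam2 * (1 - α)) =
      lam1 * (lam2 + (lam1 - lam2) * t) := by linear_combination -lam2 * hα
  have hu : 0 < lam2 + (lam1 - lam2) * t := by nlinarith
  rw [boshernitzanCoord, boshernitzanCoord, hscale, Real.log_mul (by linarith) hu.ne']
  ring

theorem one_add_boshernitzanCoord_lam2_mul {t : ℝ} (ht : 0 ≤ t) :
    1 + boshernitzanCoord lam1 lam2 (lam2 * (t - α)) =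
      boshernitzanCoord lam1 lam2 t + Real.log lam1 / (Real.log lam1 - Real.log lam2) := by
  have hscale : lam2 + (lam1 - lam2) * (lam2 * (t - α)) =
      lam2 * (lam2 + (lam1 - lam2) * t) := by linear_combination -lam2 * hα
  have hu : 0 < lam2 + (lam1 - lam2) * t := by nlinarith
  have hL : Real.log lam1 - Real.log lam2 ≠ 0 := by
    linarith [Real.log_lt_log h2 h12]
  rw [boshernitzanCoord, boshernitzanCoord, hscale, Real.log_mul h2.ne' hu.ne']
  field_simp
  ring

end boshernitzanCoord

theorem fractLift_boshernitzanCoord_apply {r a lam1 lam2 : ℝ} {f : ℝ → ℝ} (hr : 0 < r)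
    (h1 : 1 < lam1) (h2 : 0 < lam2) (h3 : lam2 < 1) (ha : (lam1 - lam2) * a = r * (1 - lam2))
    (hf1 : ∀ x ∈ Icc 0 a, f x = lam1 * x + lam2 * (r - a))
    (hf2 : ∀ x ∈ Icc a r, f x = lam2 * (x - a) + r) {x : ℝ} (hx : x ∈ Ico 0 r) :
    fractLift (boshernitzanCoord lam1 lam2) (f x / r) =
      fractLift (boshernitzanCoord lam1 lam2) (x / r) +
        Real.log lam1 / (Real.log lam1 - Real.log lam2) := by
  have h12 : lam2 < lam1 := h3.trans h1
  have hα : (lam1 - lam2) * (a / r) = 1 - lam2 := by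
    rw [← mul_div_assoc, ha]; field_simp
  have hα0 : 0 < a / r := pos_of_mul_pos_right (hα ▸ sub_pos.2 h3) (sub_pos.2 h12).le
  have hα1 : a / r < 1 := by nlinarith
  have ht : x / r ∈ Ico 0 1 := ⟨div_nonneg hx.1 hr.le, (div_lt_one hr).2 hx.2⟩
  rw [fractLift_of_mem_Ico _ ht]
  rcases lt_or_ge x a with hxa | hax
  · have hta : x / r < a / r := div_lt_div_of_pos_right hxa hr
    have hfx : f x / r = lam1 * (x / r) + lam2 * (1 - a / r) := by
      rw [hf1 x ⟨hx.1, hxa.le⟩]; field_simp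
    have hmem : lam1 * (x / r) + lam2 * (1 - a / r) ∈ Ico 0 1 :=
      ⟨by nlinarith [ht.1], by nlinarith⟩
    rw [hfx, fractLift_of_mem_Ico _ hmem, boshernitzanCoord_lam1_mul_add h2 h12 hα ht.1]
  · have hta : a / r ≤ x / r := div_le_div_of_nonneg_right hax hr.le
    have hfx : f x / r = ((1 : ℤ) : ℝ) + lam2 * (x / r - a / r) := by
      rw [hf2 x ⟨hax, hx.2.le⟩]; field_simp; ring
    have hmem : lam2 * (x / r - a / r) ∈ Ico 0 1 :=
      ⟨by nlinarith, by nlinarith [ht.2]⟩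
    rw [hfx, fractLift_intCast_add _ 1 hmem, Int.cast_one,
      one_add_boshernitzanCoord_lam2_mul h2 h12 hα ht.1]

theorem stmt10_general (r lam1 lam2 : ℝ) (hr : 0 < r)
    (h1 : 1 < lam1) (h2 : 0 < lam2) (h3 : lam2 < 1)
    (a : ℝ) (ha : a = r * (1 - lam2) / (lam1 - lam2))
    (f : ℝ → ℝ)
    (hper : ∀ x, f (x + r) = f x + r)
    (hf1 : ∀ x ∈ Set.Icc (0 : ℝ) a, f x = lam1 * x + lam2 * (r - a))
    (hf2 : ∀ x ∈ Set.Icc a r, f x = lam2 * (x - a) + r) :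
    ∃ ρ : ℝ, HasRotNum r f ρ ∧
      ∃ k : ℤ, ρ = Real.log lam1 / (Real.log lam1 - Real.log lam2) + (k : ℝ) := by
  have h12 : lam2 < lam1 := h3.trans h1
  have ha' : (lam1 - lam2) * a = r * (1 - lam2) := by
    rw [ha]; field_simp [(sub_pos.2 h12).ne']
  set H : ℝ → ℝ := fun x => fractLift (boshernitzanCoord lam1 lam2) (x / r)
  have hH (x : ℝ) : H (x + r) = H x + 1 := by
    simp only [H, add_div, div_self hr.ne', fractLift_add_one]
  refine ⟨Real.log lam1 / (Real.log lam1 - Real.log lam2),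
    hasRotNum_of_semiconj (H := H) (C := 1) ?_ ?_, 0, by simp⟩
  · exact semiconj_of_forall_mem_Ico hr hper hH
      fun x hx => fractLift_boshernitzanCoord_apply hr h1 h2 h3 ha' hf1 hf2 hx
  · exact fun x => abs_sub_fractLift_le _ (fun s hs => boshernitzanCoord_mem_Icc h2 h12 hs) _

/-- the Boshernitzan example on `S_r` with slopes `λ₁ > 1 > λ₂ > 0` and
break points `0` and `a = r(1-λ₂)/(λ₁-λ₂)` has rotation number
`log λ₁ / (log λ₁ - log λ₂) (mod 1)`. -/
theorem stmt10 (r lam1 lam2 : ℝ) (hr : 0 < r)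
    (h1 : 1 < lam1) (h2 : 0 < lam2) (h3 : lam2 < 1)
    (a : ℝ) (ha : a = r * (1 - lam2) / (lam1 - lam2))
    (f : ℝ → ℝ) (hPL : IsPLplus r f)
    (hper : ∀ x, f (x + r) = f x + r)
    (hf1 : ∀ x ∈ Set.Icc (0 : ℝ) a, f x = lam1 * x + lam2 * (r - a))
    (hf2 : ∀ x ∈ Set.Icc a r, f x = lam2 * (x - a) + r) :
    ∃ ρ : ℝ, HasRotNum r f ρ ∧
      ∃ k : ℤ, ρ = Real.log lam1 / (Real.log lam1 - Real.log lam2) + (k : ℝ) :=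
  stmt10_general r lam1 lam2 hr h1 h2 h3 a ha f hper hf1 hf2
end

section
/- Let f, g ∈ PL⁺(S_r) be commuting elements that generate a free abelian group of rank 2 acting freely on S_r. Then f has the (D)-property: for every break point a of f, the orbit { fⁿ(a) : n ∈ ℤ } contains only finitely many break points of f and the product ∏_{n∈ℤ} σ_f(fⁿ(a)) (all but finitely many factors of which equal 1) is equal to 1. -/
open Filter Topology Set

/-!
For commuting `f, g ∈ PL⁺(S_r)` the chain rule for one-sided derivatives of `f ∘ g = g ∘ f`
gives `σ_f(g y) σ_g(y) = σ_f(y) σ_g(f y)`. Multiplying over the `f`-orbit of `y`, the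
`g`-jumps telescope, so the product `D_f(y)` of the jumps of `f` along the orbit of `y`
satisfies `D_f(g y) = D_f(y)`. Since `ℤ²` acts freely, the points `fⁱ gʲ a` are pairwise
distinct modulo `r`, so only finitely many of them are break points of `f` (these lie in
finitely many classes modulo `r`). Hence some `gᵐ a` has an `f`-orbit without break points,
and `D_f(a) = D_f(gᵐ a) = 1`.
-/

open Function

theorem exists_mem_Ico_of_le_of_lt {α : Type*} [LinearOrder α] (a : ℕ → α) {t : α} :
    ∀ {k : ℕ}, a 0 ≤ t → t < a k → ∃ i < k, t ∈ Ico (a i) (a (i + 1))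
  | 0, h0, hk => absurd (h0.trans_lt hk) (lt_irrefl _)
  | k + 1, h0, hk => by
    by_cases ht : t < a k
    · obtain ⟨i, hi, hti⟩ := exists_mem_Ico_of_le_of_lt a h0 ht
      exact ⟨i, by omega, hti⟩
    · exact ⟨k, by omega, not_lt.mp ht, hk⟩

theorem exists_mem_Ioc_of_lt_of_le {α : Type*} [LinearOrder α] (a : ℕ → α) {t : α} :
    ∀ {k : ℕ}, a 0 < t → t ≤ a k → ∃ i < k, t ∈ Ioc (a i) (a (i + 1))
  | 0, h0, hk => absurd (h0.trans_le hk) (lt_irrefl _)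
  | k + 1, h0, hk => by
    by_cases ht : t ≤ a k
    · obtain ⟨i, hi, hti⟩ := exists_mem_Ioc_of_lt_of_le a h0 ht
      exact ⟨i, by omega, hti⟩
    · exact ⟨k, by omega, not_le.mp ht, hk⟩

theorem hasDerivWithinAt_of_eqOn_affine {f : ℝ → ℝ} {lam c x : ℝ} {s t : Set ℝ}
    (h : EqOn f (fun y => lam * y + c) t) (ht : t ∈ 𝓝[s] x) (hx : x ∈ t) :
    HasDerivWithinAt f lam s x := by
  have hlin : HasDerivAt (fun y => lam * y + c) lam x := by
    simpa using ((hasDerivAt_id x).const_mul lam).add_const c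
  exact hlin.hasDerivWithinAt.congr_of_eventuallyEq (eventually_of_mem ht h) (h hx)

namespace IsPLplus

variable {r : ℝ} {f g : ℝ → ℝ}

theorem map_add_int_mul (hf : IsPLplus r f) (x : ℝ) (n : ℤ) : f (x + n * r) = f x + n * r := by
  simpa [zsmul_eq_mul] using AddConstMapClass.map_add_zsmul (AddConstMap.mk f hf.2.2.1) x n

theorem eqOn_affine_add_int_mul (hf : IsPLplus r f) {lam c u v : ℝ}
    (h : EqOn f (fun y => lam * y + c) (Icc u v)) (n : ℤ) :
    EqOn f (fun y => lam * y + (c + n * r - lam * (n * r))) (Icc (u + n * r) (v + n * r)) := by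
  intro y hy
  have hy' : y - n * r ∈ Icc u v := ⟨by linarith [hy.1], by linarith [hy.2]⟩
  have := hf.map_add_int_mul (y - n * r) n
  rw [sub_add_cancel, h hy'] at this
  simp only [this]
  ring

/-- `N` consists of the classes of the subdivision points. A break point `x` has to be the left
end `u` of the piece given by the first clause, which is how break points are located. -/
theorem exists_finite_nodes (hr : 0 < r) (hf : IsPLplus r f) :
    ∃ N : Set (AddCircle r), N.Finite ∧ ∀ x : ℝ,
      (∃ u v lam c, 0 < lam ∧ x ∈ Ico u v ∧ (u : AddCircle r) ∈ N ∧
        EqOn f (fun y => lam * y + c) (Icc u v)) ∧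
      (∃ u v lam c, 0 < lam ∧ x ∈ Ioc u v ∧ EqOn f (fun y => lam * y + c) (Icc u v)) := by
  obtain ⟨k, a, -, ha0, hak, -, haff⟩ := hf.2.2.2
  refine ⟨(↑) '' (a '' Iio k), ((finite_Iio k).image a).image _, fun x => ⟨?_, ?_⟩⟩
  · obtain ⟨n, hn⟩ : ∃ n : ℤ, x - n * r ∈ Ico 0 r :=
      ⟨_, by simpa only [zero_add, zsmul_eq_mul] using sub_toIcoDiv_zsmul_mem_Ico hr 0 x⟩
    obtain ⟨i, hi, hxi⟩ := exists_mem_Ico_of_le_of_lt a (t := x - n * r)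
      (by rw [ha0]; exact hn.1) (by rw [hak]; exact hn.2)
    obtain ⟨lam, c, hlam, hfc⟩ := haff i hi
    refine ⟨a i + n * r, a (i + 1) + n * r, lam, _, hlam,
      ⟨by linarith [hxi.1], by linarith [hxi.2]⟩, ⟨a i, ⟨i, hi, rfl⟩, ?_⟩,
      hf.eqOn_affine_add_int_mul hfc n⟩
    simp
  · obtain ⟨n, hn⟩ : ∃ n : ℤ, x - n * r ∈ Ioc 0 r :=
      ⟨_, by simpa only [zero_add, zsmul_eq_mul] using sub_toIocDiv_zsmul_mem_Ioc hr 0 x⟩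
    obtain ⟨i, hi, hxi⟩ := exists_mem_Ioc_of_lt_of_le a (t := x - n * r)
      (by rw [ha0]; exact hn.1) (by rw [hak]; exact hn.2)
    obtain ⟨lam, c, hlam, hfc⟩ := haff i hi
    exact ⟨a i + n * r, a (i + 1) + n * r, lam, _, hlam,
      ⟨by linarith [hxi.1], by linarith [hxi.2]⟩, hf.eqOn_affine_add_int_mul hfc n⟩

theorem rDeriv_pos_and_hasDerivWithinAt (hr : 0 < r) (hf : IsPLplus r f) (x : ℝ) :
    0 < rDeriv f x ∧ HasDerivWithinAt f (rDeriv f x) (Ici x) x := by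
  obtain ⟨N, -, hN⟩ := hf.exists_finite_nodes hr
  obtain ⟨u, v, lam, c, hlam, hx, -, hfc⟩ := (hN x).1
  have h := hasDerivWithinAt_of_eqOn_affine hfc (Icc_mem_nhdsGE_of_mem hx)
    (Ico_subset_Icc_self hx)
  rw [rDeriv, h.derivWithin (uniqueDiffWithinAt_Ici x)]
  exact ⟨hlam, h⟩

theorem lDeriv_pos_and_hasDerivWithinAt (hr : 0 < r) (hf : IsPLplus r f) (x : ℝ) :
    0 < lDeriv f x ∧ HasDerivWithinAt f (lDeriv f x) (Iic x) x := by
  obtain ⟨N, -, hN⟩ := hf.exists_finite_nodes hr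
  obtain ⟨u, v, lam, c, hlam, hx, hfc⟩ := (hN x).2
  have h := hasDerivWithinAt_of_eqOn_affine hfc (Icc_mem_nhdsLE_of_mem hx)
    (Ioc_subset_Icc_self hx)
  rw [lDeriv, h.derivWithin (uniqueDiffWithinAt_Iic x)]
  exact ⟨hlam, h⟩

theorem finite_image_coe_setOf_isBreak (hr : 0 < r) (hf : IsPLplus r f) :
    ((↑) '' {x | IsBreak f x} : Set (AddCircle r)).Finite := by
  obtain ⟨N, hNfin, hN⟩ := hf.exists_finite_nodes hr
  refine hNfin.subset ?_
  rintro _ ⟨x, hx, rfl⟩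
  obtain ⟨u, v, lam, c, -, hxuv, hu, hfc⟩ := (hN x).1
  obtain rfl | hux := hxuv.1.eq_or_lt
  · exact hu
  have hR := hasDerivWithinAt_of_eqOn_affine hfc (Icc_mem_nhdsGE_of_mem hxuv)
    (Ico_subset_Icc_self hxuv)
  have hL := hasDerivWithinAt_of_eqOn_affine hfc (Icc_mem_nhdsLE_of_mem ⟨hux, hxuv.2.le⟩)
    (Ico_subset_Icc_self hxuv)
  exact absurd hx <| not_ne_iff.mpr <| by
    rw [rDeriv, lDeriv, hR.derivWithin (uniqueDiffWithinAt_Ici x),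
      hL.derivWithin (uniqueDiffWithinAt_Iic x)]

theorem finite_setOf_isBreak_of_injective (hr : 0 < r) (hf : IsPLplus r f) {ι : Type*}
    {φ : ι → ℝ} (hφ : Injective fun i => (φ i : AddCircle r)) :
    {i | IsBreak f (φ i)}.Finite :=
  ((hf.finite_image_coe_setOf_isBreak hr).preimage hφ.injOn).subset fun i hi => ⟨φ i, hi, rfl⟩

theorem jumpRatio_pos (hr : 0 < r) (hf : IsPLplus r f) (x : ℝ) : 0 < jumpRatio f x :=
  div_pos (hf.rDeriv_pos_and_hasDerivWithinAt hr x).1 (hf.lDeriv_pos_and_hasDerivWithinAt hr x).1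

theorem jumpRatio_eq_one (hr : 0 < r) (hf : IsPLplus r f) {x : ℝ} (hx : ¬IsBreak f x) :
    jumpRatio f x = 1 := by
  rw [jumpRatio, not_ne_iff.mp hx, div_self (hf.lDeriv_pos_and_hasDerivWithinAt hr x).1.ne']

theorem jumpRatio_comp (hr : 0 < r) (hf : IsPLplus r f) (hg : IsPLplus r g) (x : ℝ) :
    jumpRatio (f ∘ g) x = jumpRatio f (g x) * jumpRatio g x := by
  have hR := (hf.rDeriv_pos_and_hasDerivWithinAt hr (g x)).2.comp x
    (hg.rDeriv_pos_and_hasDerivWithinAt hr x).2 fun y hy => hg.1.monotone hy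
  have hL := (hf.lDeriv_pos_and_hasDerivWithinAt hr (g x)).2.comp x
    (hg.lDeriv_pos_and_hasDerivWithinAt hr x).2 fun y hy => hg.1.monotone hy
  rw [jumpRatio, rDeriv, lDeriv, hR.derivWithin (uniqueDiffWithinAt_Ici x),
    hL.derivWithin (uniqueDiffWithinAt_Iic x), mul_div_mul_comm]
  rfl

end IsPLplus

theorem finprod_mul_shift_div {G : Type*} [CommGroupWithZero G] {u w : ℤ → G}
    (hu : HasFiniteMulSupport u) (hw : HasFiniteMulSupport w) (hw0 : ∀ n, w n ≠ 0) :
    ∏ᶠ n, u n * w (n + 1) / w n = ∏ᶠ n, u n := by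
  have hw_shift : HasFiniteMulSupport fun n => w (n + 1) :=
    hw.fun_comp_of_injective (add_left_injective 1)
  have hshift : ∏ᶠ n, w (n + 1) = ∏ᶠ n, w n := finprod_comp_equiv (Equiv.addRight 1)
  rw [finprod_div_distrib (f := fun n => u n * w (n + 1)) (hu.mul hw_shift) hw,
    finprod_mul_distrib hu hw_shift, hshift, mul_div_cancel_right₀ _ (finprod_ne_zero hw0)]

noncomputable def orbitJumpProd (f : Equiv.Perm ℝ) (x : ℝ) : ℝ :=
  ∏ᶠ n : ℤ, jumpRatio f ((f ^ n) x)

section CommutingPair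

variable {r : ℝ} {f g : Equiv.Perm ℝ}

theorem injective_coe_zpow_mul_zpow_apply (hcomm : Commute f g)
    (hfree : ∀ i j : ℤ, ¬(i = 0 ∧ j = 0) →
      ∀ (x : ℝ) (k : ℤ), (f ^ i * g ^ j) x ≠ x + (k : ℝ) * r) (x : ℝ) :
    Injective fun p : ℤ × ℤ => (((f ^ p.1 * g ^ p.2) x : ℝ) : AddCircle r) := by
  intro p q hpq
  obtain ⟨k, hk⟩ := AddSubgroup.mem_zmultiples_iff.mp (QuotientAddGroup.eq_iff_sub_mem.mp hpq)
  by_contra hne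
  refine hfree (p.1 - q.1) (p.2 - q.2) (fun h => hne (Prod.ext ?_ ?_))
    ((f ^ q.1 * g ^ q.2) x) k ?_
  · exact sub_eq_zero.mp h.1
  · exact sub_eq_zero.mp h.2
  rw [← Equiv.Perm.mul_apply, (hcomm.zpow_zpow q.1 (p.2 - q.2)).symm.mul_mul_mul_comm,
    ← zpow_add, ← zpow_add, sub_add_cancel, sub_add_cancel]
  rw [zsmul_eq_mul] at hk
  linarith

theorem orbitJumpProd_apply_of_commute (hr : 0 < r) (hf : IsPLplus r f) (hg : IsPLplus r g)
    (hcomm : Commute f g) {x : ℝ} (hx : Injective fun n : ℤ => ((f ^ n) x : AddCircle r)) :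
    orbitJumpProd f (g x) = orbitJumpProd f x := by
  have hfin {F : Equiv.Perm ℝ} (hF : IsPLplus r F) :
      HasFiniteMulSupport fun n : ℤ => jumpRatio F ((f ^ n) x) :=
    (hF.finite_setOf_isBreak_of_injective hr hx).subset
      fun n hn => by_contra fun hb => hn (hF.jumpRatio_eq_one hr hb)
  have hjump (y : ℝ) : jumpRatio f (g y) * jumpRatio g y = jumpRatio g (f y) * jumpRatio f y := by
    rw [← hf.jumpRatio_comp hr hg, ← hg.jumpRatio_comp hr hf, ← Equiv.Perm.coe_mul,
      ← Equiv.Perm.coe_mul, hcomm.eq]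
  have hstep (n : ℤ) : jumpRatio f ((f ^ n) (g x)) =
      jumpRatio f ((f ^ n) x) * jumpRatio g ((f ^ (n + 1)) x) / jumpRatio g ((f ^ n) x) := by
    have hfg : (f ^ n) (g x) = g ((f ^ n) x) := by
      rw [← Equiv.Perm.mul_apply, (hcomm.zpow_left n).eq, Equiv.Perm.mul_apply]
    rw [eq_div_iff (hg.jumpRatio_pos hr _).ne', hfg, hjump, add_comm, zpow_add, zpow_one,
      Equiv.Perm.mul_apply, mul_comm]
  rw [orbitJumpProd, finprod_congr hstep,
    finprod_mul_shift_div (hfin hf) (hfin hg) fun n => (hg.jumpRatio_pos hr _).ne']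
  rfl

theorem orbitJumpProd_zpow_apply_of_commute (hr : 0 < r) (hf : IsPLplus r f)
    (hg : IsPLplus r g) (hcomm : Commute f g)
    (hx : ∀ x : ℝ, Injective fun n : ℤ => ((f ^ n) x : AddCircle r)) (m : ℤ) (x : ℝ) :
    orbitJumpProd f ((g ^ m) x) = orbitJumpProd f x := by
  induction m using Int.induction_on generalizing x with
  | zero => rfl
  | succ m ih =>
    rw [zpow_add_one, Equiv.Perm.mul_apply, ih,
      orbitJumpProd_apply_of_commute hr hf hg hcomm (hx x)]
  | pred m ih =>
    rw [zpow_sub_one, Equiv.Perm.mul_apply, ih,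
      ← orbitJumpProd_apply_of_commute hr hf hg hcomm (hx _),
      ← Equiv.Perm.mul_apply, mul_inv_cancel, Equiv.Perm.one_apply]

theorem exists_forall_not_isBreak_zpow_apply_zpow (hr : 0 < r) (hf : IsPLplus r f) {x : ℝ}
    (hx : Injective fun p : ℤ × ℤ => (((f ^ p.1 * g ^ p.2) x : ℝ) : AddCircle r)) :
    ∃ m : ℤ, ∀ n : ℤ, ¬IsBreak f ((f ^ n) ((g ^ m) x)) := by
  obtain ⟨m, hm⟩ :=
    ((hf.finite_setOf_isBreak_of_injective hr hx).image Prod.snd).infinite_compl.nonempty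
  exact ⟨m, fun n hn => hm ⟨(n, m), hn, rfl⟩⟩

end CommutingPair

theorem stmt15_general (r : ℝ) (hr : 0 < r) (f g : Equiv.Perm ℝ)
    (hf : IsPLplus r ⇑f) (hg : IsPLplus r ⇑g) (hcomm : Commute f g)
    (hfree : ∀ i j : ℤ, ¬(i = 0 ∧ j = 0) →
      ∀ (x : ℝ) (k : ℤ), (f ^ i * g ^ j) x ≠ x + (k : ℝ) * r)
    (a : ℝ) :
    {nn : ℤ | IsBreak (⇑f) ((f ^ nn) a)}.Finite ∧
      ∏ᶠ nn : ℤ, jumpRatio (⇑f) ((f ^ nn) a) = 1 := by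
  have hfree₂ := injective_coe_zpow_mul_zpow_apply hcomm hfree
  have hfree₁ (x : ℝ) : Injective fun n : ℤ => ((f ^ n) x : AddCircle r) := by
    simpa [comp_def] using (hfree₂ x).comp (Prod.mk_left_injective (0 : ℤ))
  refine ⟨hf.finite_setOf_isBreak_of_injective hr (hfree₁ a), ?_⟩
  obtain ⟨m, hm⟩ := exists_forall_not_isBreak_zpow_apply_zpow hr hf (hfree₂ a)
  change orbitJumpProd f a = 1
  rw [← orbitJumpProd_zpow_apply_of_commute hr hf hg hcomm hfree₁ m a]
  exact finprod_eq_one_of_forall_eq_one fun n => hf.jumpRatio_eq_one hr (hm n)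

/-- if `f, g ∈ PL⁺(S_r)` commute and generate a free abelian group of
rank 2 acting freely on `S_r`, then `f` has the (D)-property: along the orbit of any
break point `a` of `f` there are only finitely many break points and the product of
the jumps of `f` is `1`. -/
theorem stmt15 (r : ℝ) (hr : 0 < r) (f g : Equiv.Perm ℝ)
    (hf : IsPLplus r ⇑f) (hg : IsPLplus r ⇑g) (hcomm : Commute f g)
    (hfree : ∀ i j : ℤ, ¬(i = 0 ∧ j = 0) →
      ∀ (x : ℝ) (k : ℤ), (f ^ i * g ^ j) x ≠ x + (k : ℝ) * r)
    (a : ℝ) (ha : IsBreak (⇑f) a) :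
    {nn : ℤ | IsBreak (⇑f) ((f ^ nn) a)}.Finite ∧
      ∏ᶠ nn : ℤ, jumpRatio (⇑f) ((f ^ nn) a) = 1 :=
  stmt15_general r hr f g hf hg hcomm hfree a
end
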